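/- arXiv:2406.04023 — 4 statements merged into one kernel-verified Lean document; each statement's English description precedes it below -/
import Mathlib

section
/- Let n ≥ 3, 1 ≤ k ≤ n, r > 0, w > 0, and let X = (r/√k) I^n_k with constant weight w on every point. Then (X, w) is never a Euclidean 7-design. -/
open MeasureTheory Metric
open scoped Classical

noncomputable section

/-- The average of `f` over the sphere of radius `r` centered at the origin in `ℝⁿ`,
with respect to the `(n-1)`-dimensional surface (Hausdorff) measure. -/
def sphereAvg (n : ℕ) (r : ℝ) (f : EuclideanSpace ℝ (Fin n) → ℝ) : ℝ :=
  ⨍ x in sphere (0 : EuclideanSpace ℝ (Fin n)) r, f x ∂(μH[(n : ℝ) - 1])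

/-- `(X, w)` is a Euclidean `t`-design in `ℝⁿ`: for every polynomial `f` of total degree
at most `t`, the weighted sum of the spherical averages of `f` over the spheres through the
layers of `X` equals the weighted sum of the values of `f` on `X`. -/
def IsEuclideanDesign (n : ℕ) (X : Finset (EuclideanSpace ℝ (Fin n)))
    (w : EuclideanSpace ℝ (Fin n) → ℝ) (t : ℕ) : Prop :=
  ∀ f : MvPolynomial (Fin n) ℝ, f.totalDegree ≤ t →
    ∑ r ∈ X.image (fun x => ‖x‖),
      (∑ x ∈ X.filter (fun x => ‖x‖ = r), w x) *
        sphereAvg n r (fun x => MvPolynomial.eval (fun i => x i) f)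
    = ∑ x ∈ X, w x * MvPolynomial.eval (fun i => x i) f

/-- The signed permutation of coordinates determined by `g` and signs `ε`. -/
def signedPerm (n : ℕ) (g : Equiv.Perm (Fin n)) (ε : Fin n → Bool)
    (x : EuclideanSpace ℝ (Fin n)) : EuclideanSpace ℝ (Fin n) :=
  WithLp.toLp 2 (fun i => (if ε i then -1 else 1) * x (g i))

/-- `(X, w)` is fully symmetric: `X` is invariant under all coordinate permutations and
sign changes, and `w` is invariant as well. -/
def FullySymmetric (n : ℕ) (X : Finset (EuclideanSpace ℝ (Fin n)))
    (w : EuclideanSpace ℝ (Fin n) → ℝ) : Prop :=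
  ∀ g : Equiv.Perm (Fin n), ∀ ε : Fin n → Bool, ∀ x ∈ X,
    signedPerm n g ε x ∈ X ∧ w (signedPerm n g ε x) = w x

/-- The generalized regular hyperoctahedron `I^n_k`: vectors with entries in `{-1,0,1}`
having exactly `k` nonzero coordinates. -/
def hyperOct (n k : ℕ) : Finset (EuclideanSpace ℝ (Fin n)) :=
  ((Fintype.piFinset fun _ : Fin n => ({-1, 0, 1} : Finset ℝ)).image (WithLp.toLp 2)).filter
    (fun x => (Finset.univ.filter fun i => x i ≠ 0).card = k)

/-- The layer `(r/√k) · I^n_k`. -/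
def scaledOct (n k : ℕ) (r : ℝ) : Finset (EuclideanSpace ℝ (Fin n)) :=
  (hyperOct n k).image fun x => (r / Real.sqrt k) • x

/-- The union `X(J) = ⋃_{k ∈ J} (r_k/√k) · I^n_k`. -/
def octUnion (n : ℕ) (J : Finset ℕ) (r : ℕ → ℝ) : Finset (EuclideanSpace ℝ (Fin n)) :=
  J.biUnion fun k => scaledOct n k (r k)

/-- The weight function which is the constant `wt k` on the layer `(r_k/√k) · I^n_k`. -/
def octWeight (n : ℕ) (J : Finset ℕ) (r : ℕ → ℝ) (wt : ℕ → ℝ) :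
    EuclideanSpace ℝ (Fin n) → ℝ :=
  fun x => ∑ k ∈ J, if x ∈ scaledOct n k (r k) then wt k else 0

/-- `G(k₁,k₂) = (n+2-3k₁)(n+2-3k₂) + 6(k₁-1)(k₂-1) + 2(n-1)`. -/
def Gfun (n k₁ k₂ : ℤ) : ℤ :=
  (n + 2 - 3 * k₁) * (n + 2 - 3 * k₂) + 6 * (k₁ - 1) * (k₂ - 1) + 2 * (n - 1)

/-- `p_k = k(1 - 3(k-1)/(n-1))`. -/
def pfun (n k : ℚ) : ℚ := k * (1 - 3 * (k - 1) / (n - 1))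

/-- `q_k = 3(1 - 15(k-1)/(n-1) + 30(k-1)(k-2)/((n-1)(n-2)))`. -/
def qfun (n k : ℚ) : ℚ :=
  3 * (1 - 15 * (k - 1) / (n - 1) + 30 * (k - 1) * (k - 2) / ((n - 1) * (n - 2)))

/-- `f_{4,2}`. -/
def f42 (a b : ℝ) : ℝ := a ^ 4 - 6 * a ^ 2 * b ^ 2 + b ^ 4

/-- `f_{6,3}`. -/
def f63 (a b c : ℝ) : ℝ :=
  2 * (a ^ 6 + b ^ 6 + c ^ 6) -
    15 * (a ^ 4 * b ^ 2 + a ^ 2 * b ^ 4 + a ^ 4 * c ^ 2 + a ^ 2 * c ^ 4 +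
      b ^ 4 * c ^ 2 + b ^ 2 * c ^ 4) + 180 * a ^ 2 * b ^ 2 * c ^ 2

/-- `f_{8,2}`. -/
def f82 (a b : ℝ) : ℝ :=
  a ^ 8 - 28 * a ^ 6 * b ^ 2 + 70 * a ^ 4 * b ^ 4 - 28 * a ^ 2 * b ^ 6 + b ^ 8

/-- `f_{8,4}`. -/
def f84 (a b c d : ℝ) : ℝ :=
  3 * (a ^ 8 + b ^ 8 + c ^ 8 + d ^ 8) -
    28 * (a ^ 6 * b ^ 2 + a ^ 6 * c ^ 2 + a ^ 6 * d ^ 2 +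
      b ^ 6 * a ^ 2 + b ^ 6 * c ^ 2 + b ^ 6 * d ^ 2 +
      c ^ 6 * a ^ 2 + c ^ 6 * b ^ 2 + c ^ 6 * d ^ 2 +
      d ^ 6 * a ^ 2 + d ^ 6 * b ^ 2 + d ^ 6 * c ^ 2) +
    210 * (a ^ 4 * b ^ 2 * c ^ 2 + a ^ 4 * b ^ 2 * d ^ 2 + a ^ 4 * c ^ 2 * d ^ 2 +
      b ^ 4 * a ^ 2 * c ^ 2 + b ^ 4 * a ^ 2 * d ^ 2 + b ^ 4 * c ^ 2 * d ^ 2 +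
      c ^ 4 * a ^ 2 * b ^ 2 + c ^ 4 * a ^ 2 * d ^ 2 + c ^ 4 * b ^ 2 * d ^ 2 +
      d ^ 4 * a ^ 2 * b ^ 2 + d ^ 4 * a ^ 2 * c ^ 2 + d ^ 4 * b ^ 2 * c ^ 2) -
    3780 * a ^ 2 * b ^ 2 * c ^ 2 * d ^ 2

end


noncomputable section

namespace OctAux

variable {n k : ℕ}

def rot (n : ℕ) [NeZero n] (x : EuclideanSpace ℝ (Fin n)) : EuclideanSpace ℝ (Fin n) :=
  WithLp.toLp 2 (fun i => if i = 0 then (x 0 + x 1) / Real.sqrt 2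
           else if i = 1 then (x 0 - x 1) / Real.sqrt 2 else x i)

variable [NeZero n]

lemma rot_apply_zero (x : EuclideanSpace ℝ (Fin n)) :
    rot n x 0 = (x 0 + x 1) / Real.sqrt 2 := by simp [rot]

lemma one_ne_zero_fin (hn : 2 ≤ n) : (1 : Fin n) ≠ 0 := by
  intro h
  have := congrArg Fin.val h
  rw [Fin.val_one', Nat.mod_eq_of_lt (by omega)] at this
  simp at this

lemma rot_apply_one (hn : 2 ≤ n) (x : EuclideanSpace ℝ (Fin n)) :
    rot n x 1 = (x 0 - x 1) / Real.sqrt 2 := by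
  simp [rot, one_ne_zero_fin hn]

lemma rot_apply_other (x : EuclideanSpace ℝ (Fin n)) {i : Fin n} (hi0 : i ≠ 0) (hi1 : i ≠ 1) :
    rot n x i = x i := by simp [rot, hi0, hi1]

lemma sum_sq_rot (hn : 2 ≤ n) (x y : EuclideanSpace ℝ (Fin n)) :
    ∑ i, (rot n x i - rot n y i) ^ 2 = ∑ i, (x i - y i) ^ 2 := by
  have h10 : (1 : Fin n) ≠ 0 := one_ne_zero_fin hn
  have hsub : ({0, 1} : Finset (Fin n)) ⊆ Finset.univ := Finset.subset_univ _
  rw [← Finset.sum_sdiff hsub, ← Finset.sum_sdiff hsub]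
  congr 1
  · refine Finset.sum_congr rfl fun i hi => ?_
    simp only [Finset.mem_sdiff, Finset.mem_insert, Finset.mem_singleton, not_or] at hi
    obtain ⟨-, hi0, hi1⟩ := hi
    simp [rot, hi0, hi1]
  · rw [Finset.sum_pair (Ne.symm h10), Finset.sum_pair (Ne.symm h10)]
    have ht : Real.sqrt 2 ^ 2 = 2 := Real.sq_sqrt (by norm_num)
    have key : ∀ a b : ℝ, (a / Real.sqrt 2 - b / Real.sqrt 2) ^ 2 = (a - b) ^ 2 / 2 := by
      intro a b; rw [div_sub_div_same, div_pow, ht]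
    rw [rot_apply_zero, rot_apply_zero, rot_apply_one hn, rot_apply_one hn, key, key]
    ring

lemma rot_isometry (hn : 2 ≤ n) : Isometry (rot n) := by
  refine Isometry.of_dist_eq fun x y => ?_
  rw [EuclideanSpace.dist_eq, EuclideanSpace.dist_eq]
  congr 1
  simp only [Real.dist_eq, sq_abs]
  exact sum_sq_rot hn x y

lemma rot_rot (hn : 2 ≤ n) (x : EuclideanSpace ℝ (Fin n)) : rot n (rot n x) = x := by
  have ht : Real.sqrt 2 * Real.sqrt 2 = 2 := Real.mul_self_sqrt (by norm_num)
  ext i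
  by_cases hi0 : i = 0
  · subst hi0
    rw [rot_apply_zero, rot_apply_one hn, rot_apply_zero]
    field_simp
    rw [Real.sq_sqrt (by norm_num)]; ring
  · by_cases hi1 : i = 1
    · subst hi1
      rw [rot_apply_one hn, rot_apply_one hn, rot_apply_zero]
      field_simp
      rw [Real.sq_sqrt (by norm_num)]; ring
    · rw [rot_apply_other _ hi0 hi1, rot_apply_other _ hi0 hi1]

def rotIso (hn : 2 ≤ n) : EuclideanSpace ℝ (Fin n) ≃ᵢ EuclideanSpace ℝ (Fin n) where
  toFun := rot n
  invFun := rot n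
  left_inv := rot_rot hn
  right_inv := rot_rot hn
  isometry_toFun := rot_isometry hn

lemma rot_norm (hn : 2 ≤ n) (x : EuclideanSpace ℝ (Fin n)) : ‖rot n x‖ = ‖x‖ := by
  have h0 : rot n (0 : EuclideanSpace ℝ (Fin n)) = 0 := by
    ext i; simp [rot]
  rw [← dist_zero_right, ← dist_zero_right]
  conv_lhs => rw [← h0]
  exact (rot_isometry hn).dist_eq x 0

lemma rot_preimage_sphere (hn : 2 ≤ n) (ρ : ℝ) :
    rot n ⁻¹' sphere (0 : EuclideanSpace ℝ (Fin n)) ρ = sphere 0 ρ := by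
  ext x
  simp [mem_sphere, dist_zero_right, rot_norm hn]

lemma sphereAvg_rot (hn : 2 ≤ n) (ρ : ℝ) (f : EuclideanSpace ℝ (Fin n) → ℝ) :
    sphereAvg n ρ (fun x => f (rot n x)) = sphereAvg n ρ f := by
  unfold sphereAvg
  rw [setAverage_eq, setAverage_eq]
  congr 1
  have h := ((rotIso (n := n) hn).measurePreserving_hausdorffMeasure
      ((n : ℝ) - 1)).setIntegral_preimage_emb
      ((rotIso (n := n) hn).toHomeomorph.measurableEmbedding) f (sphere 0 ρ)
  have hco : ⇑(rotIso (n := n) hn) = rot n := rfl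
  rw [hco, rot_preimage_sphere hn] at h
  exact h

lemma sphereAvg_rot_poly (hn : 2 ≤ n) (ρ : ℝ) (P Q : MvPolynomial (Fin n) ℝ)
    (hPQ : ∀ x : EuclideanSpace ℝ (Fin n),
      MvPolynomial.eval (fun i => x i) Q = MvPolynomial.eval (fun i => rot n x i) P) :
    sphereAvg n ρ (fun x => MvPolynomial.eval (fun i => x i) Q)
      = sphereAvg n ρ (fun x => MvPolynomial.eval (fun i => x i) P) := by
  rw [show (fun x : EuclideanSpace ℝ (Fin n) => MvPolynomial.eval (fun i => x i) Q)
      = (fun x => (fun y : EuclideanSpace ℝ (Fin n) =>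
          MvPolynomial.eval (fun i => y i) P) (rot n x)) from funext fun x => hPQ x]
  exact sphereAvg_rot hn ρ (fun y : EuclideanSpace ℝ (Fin n) => MvPolynomial.eval (fun i => y i) P)

lemma mem_hyperOct_tri {x : EuclideanSpace ℝ (Fin n)} (hx : x ∈ hyperOct n k) (i : Fin n) :
    x i = -1 ∨ x i = 0 ∨ x i = 1 := by
  have h := (Finset.mem_filter.mp hx).1
  obtain ⟨y, hy, rfl⟩ := Finset.mem_image.mp h
  have := Fintype.mem_piFinset.mp hy i
  simpa using this

lemma card_filter_val_lt (hkn : k ≤ n) :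
    (Finset.univ.filter fun i : Fin n => (i : ℕ) < k).card = k := by
  rw [show (Finset.univ.filter fun i : Fin n => (i : ℕ) < k)
      = Finset.map (Fin.castLEEmb hkn) Finset.univ from ?_]
  · rw [Finset.card_map, Finset.card_univ, Fintype.card_fin]
  · ext i
    simp only [Finset.mem_filter, Finset.mem_univ, true_and, Finset.mem_map,
      Fin.coe_castLEEmb]
    constructor
    · intro h; exact ⟨⟨(i : ℕ), h⟩, by ext; simp⟩
    · rintro ⟨j, rfl⟩; simpa using j.2

lemma witness_mem (hkn : k ≤ n) :
    WithLp.toLp 2 (fun i : Fin n => if (i : ℕ) < k then (1 : ℝ) else 0) ∈ hyperOct n k := by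
  rw [hyperOct, Finset.mem_filter]
  constructor
  · refine Finset.mem_image_of_mem _ ?_
    rw [Fintype.mem_piFinset]
    intro i
    by_cases h : (i : ℕ) < k <;> simp [h]
  · rw [show (Finset.univ.filter fun i : Fin n =>
        (WithLp.toLp 2 (fun j : Fin n => if (j : ℕ) < k then (1 : ℝ) else 0)) i ≠ 0)
      = Finset.univ.filter fun i : Fin n => (i : ℕ) < k from ?_]
    · exact card_filter_val_lt hkn
    · apply Finset.filter_congr
      intro i _
      by_cases h : (i : ℕ) < k <;> simp [h]

end OctAux

end

/-- A single scaled generalized hyperoctahedron `(r/√k)·I^n_k`, with a constant weight,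
is never a Euclidean 7-design. -/
theorem scaledOct_not_isEuclideanDesign_seven
    (n k : ℕ) (hn : 3 ≤ n) (hk1 : 1 ≤ k) (hkn : k ≤ n)
    (r w : ℝ) (hr : 0 < r) (hw : 0 < w) :
    ¬ IsEuclideanDesign n (scaledOct n k r) (fun _ => w) 7 := by
  haveI : NeZero n := ⟨by omega⟩
  have hn2 : 2 ≤ n := by omega
  intro hdes
  have hk0 : (0 : ℝ) < Real.sqrt k := Real.sqrt_pos.mpr (by exact_mod_cast Nat.pos_of_ne_zero (by omega))
  set s : ℝ := r / Real.sqrt k with hs_def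
  have hs : 0 < s := div_pos hr hk0
  have hinj : ∀ x ∈ hyperOct n k, ∀ y ∈ hyperOct n k,
      (r / Real.sqrt k) • x = (r / Real.sqrt k) • y → x = y := by
    intro x _ y _ h
    exact smul_right_injective (EuclideanSpace ℝ (Fin n)) (div_pos hr hk0).ne' h
  -- key consequence of the design property
  have key : ∀ P Q : MvPolynomial (Fin n) ℝ, P.totalDegree ≤ 7 → Q.totalDegree ≤ 7 →
      (∀ x : EuclideanSpace ℝ (Fin n),
        MvPolynomial.eval (fun i => x i) Q = MvPolynomial.eval (fun i => OctAux.rot n x i) P) →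
      ∑ x ∈ hyperOct n k, MvPolynomial.eval (fun i => (s • x) i) P
        = ∑ x ∈ hyperOct n k, MvPolynomial.eval (fun i => (s • x) i) Q := by
    intro P Q hP hQ hPQ
    have h1 := hdes P hP
    have h2 := hdes Q hQ
    beta_reduce at h1 h2
    have hL : (∑ ρ ∈ (scaledOct n k r).image (fun x => ‖x‖),
        (∑ x ∈ (scaledOct n k r).filter (fun x => ‖x‖ = ρ), w)
          * sphereAvg n ρ (fun x => MvPolynomial.eval (fun i => x i) Q))
        = ∑ ρ ∈ (scaledOct n k r).image (fun x => ‖x‖),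
        (∑ x ∈ (scaledOct n k r).filter (fun x => ‖x‖ = ρ), w)
          * sphereAvg n ρ (fun x => MvPolynomial.eval (fun i => x i) P) := by
      refine Finset.sum_congr rfl fun ρ _ => ?_
      rw [OctAux.sphereAvg_rot_poly hn2 ρ P Q hPQ]
    have hsum : ∑ x ∈ scaledOct n k r, w * MvPolynomial.eval (fun i => x i) P
        = ∑ x ∈ scaledOct n k r, w * MvPolynomial.eval (fun i => x i) Q := by
      rw [← h1, ← h2, hL]
    rw [← Finset.mul_sum, ← Finset.mul_sum] at hsum
    have hsum2 := mul_left_cancel₀ hw.ne' hsum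
    rw [scaledOct, Finset.sum_image hinj, Finset.sum_image hinj] at hsum2
    exact hsum2
  -- evaluation lemmas for the four polynomials
  have ht2 : Real.sqrt 2 ^ 2 = 2 := Real.sq_sqrt (by norm_num)
  have ht4 : Real.sqrt 2 ^ 4 = 4 := by
    calc Real.sqrt 2 ^ 4 = (Real.sqrt 2 ^ 2) ^ 2 := by ring
      _ = 4 := by rw [ht2]; norm_num
  have ht6 : Real.sqrt 2 ^ 6 = 8 := by
    calc Real.sqrt 2 ^ 6 = (Real.sqrt 2 ^ 2) ^ 3 := by ring
      _ = 8 := by rw [ht2]; norm_num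
  set P4 : MvPolynomial (Fin n) ℝ := MvPolynomial.X 0 ^ 4 + MvPolynomial.X 1 ^ 4 with hP4
  set Q4 : MvPolynomial (Fin n) ℝ := MvPolynomial.C (1/2 : ℝ)
      * (MvPolynomial.X 0 ^ 4 + MvPolynomial.X 1 ^ 4)
      + MvPolynomial.C (3 : ℝ) * (MvPolynomial.X 0 ^ 2 * MvPolynomial.X 1 ^ 2) with hQ4
  set P6 : MvPolynomial (Fin n) ℝ := MvPolynomial.X 0 ^ 6 + MvPolynomial.X 1 ^ 6 with hP6
  set Q6 : MvPolynomial (Fin n) ℝ := MvPolynomial.C (1/4 : ℝ)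
      * (MvPolynomial.X 0 ^ 6 + MvPolynomial.X 1 ^ 6)
      + MvPolynomial.C (15/4 : ℝ)
        * (MvPolynomial.X 0 ^ 4 * MvPolynomial.X 1 ^ 2
           + MvPolynomial.X 0 ^ 2 * MvPolynomial.X 1 ^ 4) with hQ6
  have dP4 : P4.totalDegree ≤ 7 := by
    refine le_trans (MvPolynomial.totalDegree_add _ _) ?_
    rw [MvPolynomial.totalDegree_X_pow, MvPolynomial.totalDegree_X_pow]
    norm_num
  have dP6 : P6.totalDegree ≤ 7 := by
    refine le_trans (MvPolynomial.totalDegree_add _ _) ?_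
    rw [MvPolynomial.totalDegree_X_pow, MvPolynomial.totalDegree_X_pow]
    norm_num
  have dmul : ∀ (a b : ℕ), a + b ≤ 7 →
      ((MvPolynomial.X 0 ^ a * MvPolynomial.X 1 ^ b : MvPolynomial (Fin n) ℝ)).totalDegree ≤ 7 := by
    intro a b hab
    refine le_trans (MvPolynomial.totalDegree_mul _ _) ?_
    rw [MvPolynomial.totalDegree_X_pow, MvPolynomial.totalDegree_X_pow]
    exact hab
  have dC : ∀ (c : ℝ) (p : MvPolynomial (Fin n) ℝ), p.totalDegree ≤ 7 →
      (MvPolynomial.C c * p).totalDegree ≤ 7 := by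
    intro c p hp
    refine le_trans (MvPolynomial.totalDegree_mul _ _) ?_
    rw [MvPolynomial.totalDegree_C]
    simpa using hp
  have dQ4 : Q4.totalDegree ≤ 7 := by
    rw [hQ4]
    refine le_trans (MvPolynomial.totalDegree_add _ _) (max_le ?_ ?_)
    · exact dC _ _ dP4
    · exact dC _ _ (dmul 2 2 (by norm_num))
  have dQ6 : Q6.totalDegree ≤ 7 := by
    rw [hQ6]
    refine le_trans (MvPolynomial.totalDegree_add _ _) (max_le ?_ ?_)
    · exact dC _ _ dP6
    · refine dC _ _ ?_
      refine le_trans (MvPolynomial.totalDegree_add _ _) (max_le ?_ ?_)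
      · exact dmul 4 2 (by norm_num)
      · exact dmul 2 4 (by norm_num)
  have rel4 : ∀ x : EuclideanSpace ℝ (Fin n),
      MvPolynomial.eval (fun i => x i) Q4 = MvPolynomial.eval (fun i => OctAux.rot n x i) P4 := by
    intro x
    rw [hP4, hQ4]
    simp only [MvPolynomial.eval_add, MvPolynomial.eval_mul, MvPolynomial.eval_pow,
      MvPolynomial.eval_X, MvPolynomial.eval_C]
    rw [OctAux.rot_apply_zero, OctAux.rot_apply_one hn2, div_pow, div_pow, ht4]
    ring
  have rel6 : ∀ x : EuclideanSpace ℝ (Fin n),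
      MvPolynomial.eval (fun i => x i) Q6 = MvPolynomial.eval (fun i => OctAux.rot n x i) P6 := by
    intro x
    rw [hP6, hQ6]
    simp only [MvPolynomial.eval_add, MvPolynomial.eval_mul, MvPolynomial.eval_pow,
      MvPolynomial.eval_X, MvPolynomial.eval_C]
    rw [OctAux.rot_apply_zero, OctAux.rot_apply_one hn2, div_pow, div_pow, ht6]
    ring
  have ev4 : ∀ x ∈ hyperOct n k, MvPolynomial.eval (fun i => (s • x) i) P4
      = s ^ 4 * ((x 0) ^ 2 + (x 1) ^ 2) := by
    intro x hx
    have t0 := OctAux.mem_hyperOct_tri hx 0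
    have t1 := OctAux.mem_hyperOct_tri hx 1
    rw [hP4]
    simp only [MvPolynomial.eval_add, MvPolynomial.eval_pow, MvPolynomial.eval_X,
      PiLp.smul_apply, smul_eq_mul]
    rcases t0 with h | h | h <;> rcases t1 with h' | h' | h' <;> rw [h, h'] <;> ring
  have ev4Q : ∀ x ∈ hyperOct n k, MvPolynomial.eval (fun i => (s • x) i) Q4
      = s ^ 4 * (((x 0) ^ 2 + (x 1) ^ 2) / 2 + 3 * ((x 0) ^ 2 * (x 1) ^ 2)) := by
    intro x hx
    have t0 := OctAux.mem_hyperOct_tri hx 0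
    have t1 := OctAux.mem_hyperOct_tri hx 1
    rw [hQ4]
    simp only [MvPolynomial.eval_add, MvPolynomial.eval_mul, MvPolynomial.eval_pow,
      MvPolynomial.eval_X, MvPolynomial.eval_C, PiLp.smul_apply, smul_eq_mul]
    rcases t0 with h | h | h <;> rcases t1 with h' | h' | h' <;> rw [h, h'] <;> ring
  have ev6 : ∀ x ∈ hyperOct n k, MvPolynomial.eval (fun i => (s • x) i) P6
      = s ^ 6 * ((x 0) ^ 2 + (x 1) ^ 2) := by
    intro x hx
    have t0 := OctAux.mem_hyperOct_tri hx 0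
    have t1 := OctAux.mem_hyperOct_tri hx 1
    rw [hP6]
    simp only [MvPolynomial.eval_add, MvPolynomial.eval_pow, MvPolynomial.eval_X,
      PiLp.smul_apply, smul_eq_mul]
    rcases t0 with h | h | h <;> rcases t1 with h' | h' | h' <;> rw [h, h'] <;> ring
  have ev6Q : ∀ x ∈ hyperOct n k, MvPolynomial.eval (fun i => (s • x) i) Q6
      = s ^ 6 * (((x 0) ^ 2 + (x 1) ^ 2) / 4 + (15/2) * ((x 0) ^ 2 * (x 1) ^ 2)) := by
    intro x hx
    have t0 := OctAux.mem_hyperOct_tri hx 0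
    have t1 := OctAux.mem_hyperOct_tri hx 1
    rw [hQ6]
    simp only [MvPolynomial.eval_add, MvPolynomial.eval_mul, MvPolynomial.eval_pow,
      MvPolynomial.eval_X, MvPolynomial.eval_C, PiLp.smul_apply, smul_eq_mul]
    rcases t0 with h | h | h <;> rcases t1 with h' | h' | h' <;> rw [h, h'] <;> ring
  -- the two linear relations
  have h4 := key P4 Q4 dP4 dQ4 rel4
  have h4' : (∑ x ∈ hyperOct n k, s ^ 4 * ((x 0) ^ 2 + (x 1) ^ 2))
      = ∑ x ∈ hyperOct n k,
        s ^ 4 * (((x 0) ^ 2 + (x 1) ^ 2) / 2 + 3 * ((x 0) ^ 2 * (x 1) ^ 2)) :=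
    calc (∑ x ∈ hyperOct n k, s ^ 4 * ((x 0) ^ 2 + (x 1) ^ 2))
        = ∑ x ∈ hyperOct n k, MvPolynomial.eval (fun i => (s • x) i) P4 :=
          Finset.sum_congr rfl fun x hx => (ev4 x hx).symm
      _ = ∑ x ∈ hyperOct n k, MvPolynomial.eval (fun i => (s • x) i) Q4 := h4
      _ = _ := Finset.sum_congr rfl ev4Q
  have h6 := key P6 Q6 dP6 dQ6 rel6
  have h6' : (∑ x ∈ hyperOct n k, s ^ 6 * ((x 0) ^ 2 + (x 1) ^ 2))
      = ∑ x ∈ hyperOct n k,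
        s ^ 6 * (((x 0) ^ 2 + (x 1) ^ 2) / 4 + (15/2) * ((x 0) ^ 2 * (x 1) ^ 2)) :=
    calc (∑ x ∈ hyperOct n k, s ^ 6 * ((x 0) ^ 2 + (x 1) ^ 2))
        = ∑ x ∈ hyperOct n k, MvPolynomial.eval (fun i => (s • x) i) P6 :=
          Finset.sum_congr rfl fun x hx => (ev6 x hx).symm
      _ = ∑ x ∈ hyperOct n k, MvPolynomial.eval (fun i => (s • x) i) Q6 := h6
      _ = _ := Finset.sum_congr rfl ev6Q
  rw [← Finset.mul_sum, ← Finset.mul_sum] at h4' h6'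
  have h4'' := mul_left_cancel₀ (pow_ne_zero 4 hs.ne') h4'
  have h6'' := mul_left_cancel₀ (pow_ne_zero 6 hs.ne') h6'
  have split4 : (∑ x ∈ hyperOct n k, (((x 0) ^ 2 + (x 1) ^ 2) / 2 + 3 * ((x 0) ^ 2 * (x 1) ^ 2)))
      = (∑ x ∈ hyperOct n k, ((x 0) ^ 2 + (x 1) ^ 2)) / 2
        + 3 * ∑ x ∈ hyperOct n k, ((x 0) ^ 2 * (x 1) ^ 2) := by
    rw [Finset.sum_add_distrib, Finset.sum_div, Finset.mul_sum]
  have split6 : (∑ x ∈ hyperOct n k, (((x 0) ^ 2 + (x 1) ^ 2) / 4 + (15/2) * ((x 0) ^ 2 * (x 1) ^ 2)))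
      = (∑ x ∈ hyperOct n k, ((x 0) ^ 2 + (x 1) ^ 2)) / 4
        + (15/2) * ∑ x ∈ hyperOct n k, ((x 0) ^ 2 * (x 1) ^ 2) := by
    rw [Finset.sum_add_distrib, Finset.sum_div, Finset.mul_sum]
  rw [split4] at h4''
  rw [split6] at h6''
  -- positivity of the quadratic sum
  have hwmem := OctAux.witness_mem (n := n) hkn
  have h0val : (fun i : Fin n => if (i : ℕ) < k then (1 : ℝ) else 0) (0 : Fin n) = 1 := by
    have h00 : ((0 : Fin n) : ℕ) = 0 := rfl
    simp only [h00]
    rw [if_pos (by omega)]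
  have hEApos : (1 : ℝ) ≤ ∑ x ∈ hyperOct n k, ((x 0) ^ 2 + (x 1) ^ 2) := by
    have hle : ((fun i : Fin n => if (i : ℕ) < k then (1 : ℝ) else 0) 0) ^ 2
          + ((fun i : Fin n => if (i : ℕ) < k then (1 : ℝ) else 0) 1) ^ 2
        ≤ ∑ x ∈ hyperOct n k, ((x 0) ^ 2 + (x 1) ^ 2) := by
      have := Finset.single_le_sum (f := fun x : EuclideanSpace ℝ (Fin n) => (x 0) ^ 2 + (x 1) ^ 2)
        (fun x _ => by positivity) hwmem
      exact this
    rw [h0val] at hle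
    nlinarith [sq_nonneg ((fun i : Fin n => if (i : ℕ) < k then (1 : ℝ) else 0) 1)]
  linarith [h4'', h6'', hEApos]
end

section
/- Let n ≥ 3 be an integer and let 1 ≤ k_1 < k_2 ≤ n. Then p_{k_1} q_{k_2} − p_{k_2} q_{k_1} = (3(n+8) / ((n−1)^2 (n−2))) · (k_1 − k_2) · G(k_1, k_2). -/
open MeasureTheory Metric
open scoped Classical

/-- `p_{k₁}q_{k₂} - p_{k₂}q_{k₁} = (3(n+8)/((n-1)²(n-2))) (k₁-k₂) G(k₁,k₂)`. -/
theorem pfun_qfun_sub_eq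
    (n k₁ k₂ : ℤ) (hn : 3 ≤ n) (h1 : 1 ≤ k₁) (h12 : k₁ < k₂) (h2n : k₂ ≤ n) :
    pfun n k₁ * qfun n k₂ - pfun n k₂ * qfun n k₁ =
      3 * ((n : ℚ) + 8) / (((n : ℚ) - 1) ^ 2 * ((n : ℚ) - 2)) * ((k₁ : ℚ) - k₂) *
        ((Gfun n k₁ k₂ : ℤ) : ℚ) := by

  have hne1 : ((n : ℚ) - 1) ≠ 0 := by
    have : (3 : ℚ) ≤ (n : ℚ) := by exact_mod_cast hn
    linarith
  have hne2 : ((n : ℚ) - 2) ≠ 0 := by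
    have : (3 : ℚ) ≤ (n : ℚ) := by exact_mod_cast hn
    linarith
  simp only [pfun, qfun, Gfun]
  push_cast
  field_simp
  ring
end

section
/- Let n ≥ 3 be an integer, let 1 ≤ k_1 < k_2 < k_3 < k_4 ≤ n be integers, and suppose G(k_2, k_3) ≤ 0. Then: (a) 3k_2 < n + 2 and 3k_3 > n + 2; (b) p_{k_2} > 0 and p_{k_3} < 0; and (c) G(k_1, k_2) > 0 and G(k_3, k_4) > 0. -/
open MeasureTheory Metric
open scoped Classical

/-- If `1 ≤ k₁ < k₂ < k₃ < k₄ ≤ n` and `G(k₂,k₃) ≤ 0`, then `3k₂ < n+2`, `3k₃ > n+2`,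
`p_{k₂} > 0`, `p_{k₃} < 0`, `G(k₁,k₂) > 0`, and `G(k₃,k₄) > 0`. -/
theorem of_G_nonpos
    (n k₁ k₂ k₃ k₄ : ℤ) (hn : 3 ≤ n) (h1 : 1 ≤ k₁) (h12 : k₁ < k₂) (h23 : k₂ < k₃)
    (h34 : k₃ < k₄) (h4n : k₄ ≤ n) (hG : Gfun n k₂ k₃ ≤ 0) :
    (3 * k₂ < n + 2 ∧ 3 * k₃ > n + 2) ∧
      (0 < pfun n k₂ ∧ pfun n k₃ < 0) ∧
      (0 < Gfun n k₁ k₂ ∧ 0 < Gfun n k₃ k₄) := by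
  have hk2 : 2 ≤ k₂ := by omega
  have hk3 : 3 ≤ k₃ := by omega
  have hkn : k₃ + 1 ≤ n := by omega
  have h2 : 3 * k₂ < n + 2 := by
    by_contra h
    push_neg at h
    unfold Gfun at hG
    nlinarith [mul_nonneg (by linarith : (0:ℤ) ≤ 3*k₂ - (n+2))
        (by linarith : (0:ℤ) ≤ 3*k₃ - (n+2)),
      mul_nonneg (by linarith : (0:ℤ) ≤ k₂ - 1) (by linarith : (0:ℤ) ≤ k₃ - 1)]
  have h3 : n + 2 < 3 * k₃ := by
    by_contra h
    push_neg at h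
    unfold Gfun at hG
    nlinarith [mul_nonneg (by linarith : (0:ℤ) ≤ n+2-3*k₂)
        (by linarith : (0:ℤ) ≤ n+2-3*k₃),
      mul_nonneg (by linarith : (0:ℤ) ≤ k₂ - 1) (by linarith : (0:ℤ) ≤ k₃ - 1)]
  have hn1 : (0:ℚ) < (n:ℚ) - 1 := by
    have : (3:ℚ) ≤ (n:ℚ) := by exact_mod_cast hn
    linarith
  have key : ∀ k : ℤ, 0 < k → pfun (n:ℚ) (k:ℚ) = (k:ℚ) * (((n:ℚ)+2-3*k)/((n:ℚ)-1)) := by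
    intro k _
    unfold pfun
    congr 1
    field_simp
    ring
  have hp2 : 0 < pfun n k₂ := by
    rw [key k₂ (by omega)]
    apply mul_pos
    · exact_mod_cast (by omega : (0:ℤ) < k₂)
    · apply div_pos _ hn1
      have : (3*k₂:ℚ) < (n:ℚ) + 2 := by exact_mod_cast h2
      linarith
  have hp3 : pfun n k₃ < 0 := by
    rw [key k₃ (by omega)]
    apply mul_neg_of_pos_of_neg
    · exact_mod_cast (by omega : (0:ℤ) < k₃)
    · apply div_neg_of_neg_of_pos _ hn1
      have : ((n:ℚ) + 2) < 3*k₃ := by exact_mod_cast h3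
      linarith
  refine ⟨⟨h2, h3⟩, ⟨hp2, hp3⟩, ?_, ?_⟩
  · unfold Gfun
    nlinarith [mul_pos (by linarith : (0:ℤ) < n+2-3*k₁) (by linarith : (0:ℤ) < n+2-3*k₂),
      mul_nonneg (by linarith : (0:ℤ) ≤ k₁ - 1) (by linarith : (0:ℤ) ≤ k₂ - 1)]
  · unfold Gfun
    nlinarith [mul_pos_of_neg_of_neg (by linarith : n+2-3*k₃ < (0:ℤ))
        (by linarith : n+2-3*k₄ < (0:ℤ)),
      mul_nonneg (by linarith : (0:ℤ) ≤ k₃ - 1) (by linarith : (0:ℤ) ≤ k₄ - 1)]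
end

section
/- Say that a positive integer n has property G if there exist positive integers k_1, k_2 ≤ n with G(k_1, k_2) = 0. Then: (i) if n ≡ 0 mod 3, then n does not have property G (G(k_1, k_2) ≠ 0 for all positive integers k_1, k_2 ≤ n); (ii) if n ≡ 2 mod 3 and n ≥ 2, then n has property G, witnessed by k_1 = 1 and k_2 = (n+4)/3 (i.e. G(1, (n+4)/3) = 0); (iii) for every positive integer c, the integer n = 90c² + 45c + 1 has property G, witnessed by k_1 = 3c + 1 and k_2 = 30c² + 17c + 2. -/
open MeasureTheory Metric
open scoped Classical

/-- (i) If `n ≡ 0 (mod 3)` then `n` does not have property `G`; (ii) if `n ≡ 2 (mod 3)`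
and `n ≥ 2` then `G(1, (n+4)/3) = 0` with `1 ≤ (n+4)/3 ≤ n`; (iii) for every positive
integer `c`, `n = 90c² + 45c + 1` has property `G`, witnessed by `k₁ = 3c+1` and
`k₂ = 30c² + 17c + 2`. -/
theorem property_G_criteria :
    (∀ n : ℕ, n % 3 = 0 → ∀ k₁ k₂ : ℕ, 1 ≤ k₁ → k₁ ≤ n → 1 ≤ k₂ → k₂ ≤ n →
      Gfun n k₁ k₂ ≠ 0) ∧
    (∀ n : ℕ, n % 3 = 2 → 2 ≤ n →
      1 ≤ (n + 4) / 3 ∧ (n + 4) / 3 ≤ n ∧ Gfun n 1 (((n + 4) / 3 : ℕ)) = 0) ∧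
    (∀ c : ℕ, 1 ≤ c →
      1 ≤ 3 * c + 1 ∧ 3 * c + 1 ≤ 90 * c ^ 2 + 45 * c + 1 ∧
      1 ≤ 30 * c ^ 2 + 17 * c + 2 ∧ 30 * c ^ 2 + 17 * c + 2 ≤ 90 * c ^ 2 + 45 * c + 1 ∧
      Gfun ((90 * c ^ 2 + 45 * c + 1 : ℕ)) ((3 * c + 1 : ℕ)) ((30 * c ^ 2 + 17 * c + 2 : ℕ)) = 0) := by
  refine ⟨?_, ?_, ?_⟩
  · intro n hn k₁ k₂ _ _ _ _
    obtain ⟨t, ht⟩ : ∃ t, n = 3 * t := ⟨n / 3, by omega⟩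
    have hcast : (n : ℤ) = 3 * t := by exact_mod_cast ht
    have : Gfun n k₁ k₂ =
        3 * (3*(t:ℤ)*t + 6*t + 2 - 3*t*k₁ - 3*t*k₂ - 4*k₁ - 4*k₂ + 5*k₁*k₂) + 2 := by
      simp only [Gfun, hcast]; ring
    omega
  · intro n hn hn2
    obtain ⟨m, hm⟩ : ∃ m, n = 3 * m + 2 := ⟨n / 3, by omega⟩
    refine ⟨by omega, by omega, ?_⟩
    have h1 : (n + 4) / 3 = m + 2 := by omega
    have hcast : (n : ℤ) = 3 * m + 2 := by exact_mod_cast hm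
    rw [h1]
    simp only [Gfun]
    push_cast
    rw [hcast]; ring
  · intro c hc
    refine ⟨by omega, by nlinarith, by omega, by nlinarith, ?_⟩
    simp only [Gfun]
    push_cast
    ring
end
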